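/- arXiv:1204.5268 — 9 statements merged into one kernel-verified Lean document; each statement's English description precedes it below -/
import Mathlib

section
/- For every finite set C of unit vectors in ℝ^n (n ≥ 2) and every k ≥ 1, the sum over all ordered pairs (x,y) ∈ C × C of G_k^{(n)}(⟨x,y⟩) is nonnegative, where G_k^{(n)} is the degree-k Gegenbauer polynomial normalized by G_k^{(n)}(1)=1. -/
open RealInnerProductSpace

/-- The Gegenbauer polynomials `G_k^{(n)}`, normalized so that `G_k^{(n)}(1) = 1`. -/
noncomputable def gegenbauer (n : ℕ) : ℕ → ℝ → ℝ
  | 0 => fun _ => 1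
  | 1 => fun t => t
  | (k + 2) => fun t =>
      ((2 * ((k : ℝ) + 2) + (n : ℝ) - 4) * t * gegenbauer n (k + 1) t
        - (((k : ℝ) + 2) - 1) * gegenbauer n k t) / (((k : ℝ) + 2) + (n : ℝ) - 3)

/-!
The Fischer inner product `⟨p, q⟩ = ∑ α! p_α q_α` on real polynomials is positive semidefinite,
and multiplication by `X i` is adjoint to `∂ᵢ`. Hence multiplication by `‖X‖²` is adjoint to the
Laplacian, and `⟨p, ⟨x, X⟩ᵏ⟩ = k! p(x)` for `p` homogeneous of degree `k`. Homogenizing the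
three-term recurrence of `G_k^{(n)}` gives, for each unit vector `y`, a harmonic polynomial `Z_y`
of degree `k` with `Z_y(x) = G_k^{(n)}(⟨x, y⟩)` on the sphere, and `⟨x, X⟩ᵏ ≡ c Z_x` modulo `‖X‖²`
with a constant `c > 0` independent of `x`. Harmonic polynomials are orthogonal to the multiples of
`‖X‖²`, so `k! G_k^{(n)}(⟨x, y⟩) = ⟨Z_y, ⟨x, X⟩ᵏ⟩ = c ⟨Z_x, Z_y⟩`: the kernel is a Gram kernel,
and `∑_{x, y ∈ C} G_k^{(n)}(⟨x, y⟩) = (c / k!) ⟨∑ Z_x, ∑ Z_x⟩ ≥ 0`.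
-/

open Finset

noncomputable section

namespace MvPolynomial

variable {σ : Type*} [Fintype σ]

def multiFactorial (α : σ →₀ ℕ) : ℕ := ∏ i, (α i).factorial

lemma multiFactorial_add_single [DecidableEq σ] (α : σ →₀ ℕ) (i : σ) :
    multiFactorial (α + Finsupp.single i 1) = (α i + 1) * multiFactorial α := by
  rw [multiFactorial, multiFactorial, ← mul_prod_erase univ _ (mem_univ i),
    ← mul_prod_erase univ _ (mem_univ i), prod_congr rfl fun j hj => by
      rw [Finsupp.add_apply, Finsupp.single_eq_of_ne (ne_of_mem_erase hj), add_zero]]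
  simp [Nat.factorial_succ, mul_assoc]

omit [Fintype σ] in
lemma sum_support_mul_coeff_eq_of_subset (f : (σ →₀ ℕ) → ℝ) {q : MvPolynomial σ ℝ}
    {s : Finset (σ →₀ ℕ)} (h : q.support ⊆ s) :
    ∑ α ∈ q.support, f α * coeff α q = ∑ α ∈ s, f α * coeff α q :=
  sum_subset h fun α _ hα => by rw [notMem_support_iff.mp hα, mul_zero]

def fischerInner : MvPolynomial σ ℝ →ₗ[ℝ] MvPolynomial σ ℝ →ₗ[ℝ] ℝ :=
  LinearMap.mk₂ ℝ (fun p q => ∑ α ∈ q.support, (multiFactorial α * coeff α p) * coeff α q)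
    (fun p p' q => by simp only [coeff_add, mul_add, add_mul, sum_add_distrib])
    (fun a p q => by
      simp only [coeff_smul, smul_eq_mul, Finset.mul_sum]
      exact sum_congr rfl fun α _ => by ring)
    (fun p q q' => by
      classical
      rw [sum_support_mul_coeff_eq_of_subset _ support_add,
        sum_support_mul_coeff_eq_of_subset _ (subset_union_left (s₂ := q'.support)),
        sum_support_mul_coeff_eq_of_subset _ (subset_union_right (s₁ := q.support))]
      simp only [coeff_add, mul_add, sum_add_distrib])
    (fun a p q => by
      classical
      rw [sum_support_mul_coeff_eq_of_subset _ (support_smul (a := a) (f := q)), smul_eq_mul,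
        Finset.mul_sum]
      simp only [coeff_smul, smul_eq_mul, mul_left_comm])

lemma fischerInner_apply_of_support_subset {p q : MvPolynomial σ ℝ} {s : Finset (σ →₀ ℕ)}
    (h : q.support ⊆ s) :
    fischerInner p q = ∑ α ∈ s, multiFactorial α * coeff α p * coeff α q :=
  sum_support_mul_coeff_eq_of_subset _ h

lemma fischerInner_comm (p q : MvPolynomial σ ℝ) : fischerInner p q = fischerInner q p := by
  rw [fischerInner_apply_of_support_subset subset_union_right,
    fischerInner_apply_of_support_subset (subset_union_left : p.support ⊆ p.support ∪ q.support)]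
  exact sum_congr rfl fun α _ => by ring

lemma fischerInner_self_nonneg (p : MvPolynomial σ ℝ) : 0 ≤ fischerInner p p :=
  sum_nonneg fun α _ => by rw [mul_assoc, ← sq]; positivity

lemma fischerInner_monomial (p : MvPolynomial σ ℝ) (α : σ →₀ ℕ) (c : ℝ) :
    fischerInner p (monomial α c) = multiFactorial α * coeff α p * c := by
  classical
  rw [fischerInner_apply_of_support_subset support_monomial_subset, sum_singleton, coeff_monomial,
    if_pos rfl]

lemma fischerInner_X_mul (i : σ) (p q : MvPolynomial σ ℝ) :
    fischerInner (X i * p) q = fischerInner p (pderiv i q) := by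
  classical
  induction q using induction_on' with
  | add q q' hq hq' => rw [map_add, map_add, map_add, hq, hq']
  | monomial α c =>
    rw [pderiv_monomial, fischerInner_monomial, fischerInner_monomial]
    by_cases hα : α i = 0
    · rw [coeff_X_mul', if_neg (by simpa using hα), hα]
      simp
    · obtain ⟨β, rfl⟩ : ∃ β, α = Finsupp.single i 1 + β :=
        ⟨α - Finsupp.single i 1, (add_tsub_cancel_of_le
          (Finsupp.single_le_iff.mpr (Nat.one_le_iff_ne_zero.mpr hα))).symm⟩
      rw [coeff_X_mul, add_tsub_cancel_left, add_comm, multiFactorial_add_single]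
      simp only [Finsupp.coe_add, Pi.add_apply, Finsupp.single_eq_same]
      push_cast
      ring

section Operators

variable {R : Type*} [CommRing R]

def linearForm (y : σ → R) : MvPolynomial σ R := ∑ i, C (y i) * X i

def sqNorm : MvPolynomial σ R := ∑ i, X i ^ 2

def dirDeriv (y : σ → R) : Derivation R (MvPolynomial σ R) (MvPolynomial σ R) :=
  ∑ i, y i • pderiv i

def laplacian : Module.End R (MvPolynomial σ R) :=
  ∑ i, (pderiv i).toLinearMap ∘ₗ (pderiv i).toLinearMap

lemma dirDeriv_apply (y : σ → R) (p : MvPolynomial σ R) :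
    dirDeriv y p = ∑ i, C (y i) * pderiv i p := by
  rw [dirDeriv, ← Derivation.coeFnAddMonoidHom_apply, map_sum, Finset.sum_apply]
  simp [C_mul']

lemma laplacian_apply (p : MvPolynomial σ R) :
    laplacian p = ∑ i, pderiv i (pderiv i p) := by
  simp [laplacian, LinearMap.sum_apply]

lemma isHomogeneous_linearForm (y : σ → R) : (linearForm y).IsHomogeneous 1 :=
  IsHomogeneous.sum _ _ _ fun i _ => isHomogeneous_C_mul_X (y i) i

lemma isHomogeneous_sqNorm : (sqNorm : MvPolynomial σ R).IsHomogeneous 2 :=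
  IsHomogeneous.sum _ _ _ fun i _ => isHomogeneous_X_pow i 2

lemma eval_linearForm (x y : σ → R) : eval x (linearForm y) = y ⬝ᵥ x := by
  simp [linearForm, dotProduct]

lemma eval_sqNorm (x : σ → R) : eval x sqNorm = x ⬝ᵥ x := by
  simp [sqNorm, dotProduct, sq]

lemma pderiv_linearForm [DecidableEq σ] (y : σ → R) (i : σ) :
    pderiv i (linearForm y) = C (y i) := by
  simp [linearForm, pderiv_X, Pi.single_apply]

lemma pderiv_sqNorm [DecidableEq σ] (i : σ) : pderiv i (sqNorm : MvPolynomial σ R) = 2 * X i := by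
  simp [sqNorm, pderiv_X, Pi.single_apply]

lemma dirDeriv_linearForm (y z : σ → R) : dirDeriv y (linearForm z) = C (y ⬝ᵥ z) := by
  classical
  simp [dirDeriv_apply, pderiv_linearForm, dotProduct]

lemma dirDeriv_sqNorm (y : σ → R) : dirDeriv y sqNorm = 2 * linearForm y := by
  classical
  simp [dirDeriv_apply, pderiv_sqNorm, linearForm, Finset.mul_sum, mul_left_comm]

lemma dirDeriv_C_mul (y : σ → R) (a : R) (p : MvPolynomial σ R) :
    dirDeriv y (C a * p) = C a * dirDeriv y p := by
  rw [C_mul', Derivation.map_smul, C_mul']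

lemma laplacian_C_mul (a : R) (p : MvPolynomial σ R) :
    laplacian (C a * p) = C a * laplacian p := by
  rw [C_mul', map_smul, C_mul']

lemma eval_dirDeriv_self {p : MvPolynomial σ R} {k : ℕ} (hp : p.IsHomogeneous k) (x : σ → R) :
    eval x (dirDeriv x p) = k * eval x p := by
  simpa [dirDeriv_apply] using congrArg (eval x) hp.sum_X_mul_pderiv

lemma IsHomogeneous.dirDeriv {p : MvPolynomial σ R} {k : ℕ} (hp : p.IsHomogeneous (k + 1))
    (y : σ → R) : (dirDeriv y p).IsHomogeneous k := by
  rw [dirDeriv_apply]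
  exact IsHomogeneous.sum _ _ _ fun i _ => by simpa using (isHomogeneous_C _ (y i)).mul hp.pderiv

lemma laplacian_mul (p q : MvPolynomial σ R) :
    laplacian (p * q) = p * laplacian q + q * laplacian p + 2 * ∑ i, pderiv i p * pderiv i q := by
  simp only [laplacian_apply, pderiv_mul, map_add, Finset.mul_sum, ← sum_add_distrib]
  exact sum_congr rfl fun i _ => by ring

lemma laplacian_linearForm (y : σ → R) : laplacian (linearForm y) = 0 := by
  classical
  simp [laplacian_apply, pderiv_linearForm]

lemma laplacian_sqNorm : laplacian (sqNorm : MvPolynomial σ R) = 2 * Fintype.card σ := by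
  classical
  have h2 : ∀ i : σ, pderiv i (2 : MvPolynomial σ R) = 0 := fun i => by
    simpa using (pderiv i).map_natCast 2
  simp [laplacian_apply, pderiv_sqNorm, h2, mul_comm]

lemma laplacian_linearForm_mul (y : σ → R) (p : MvPolynomial σ R) :
    laplacian (linearForm y * p) = linearForm y * laplacian p + 2 * dirDeriv y p := by
  classical
  simp [laplacian_mul, laplacian_linearForm, pderiv_linearForm, dirDeriv_apply]

lemma laplacian_sqNorm_mul {p : MvPolynomial σ R} {k : ℕ} (hp : p.IsHomogeneous k) :
    laplacian (sqNorm * p) =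
      sqNorm * laplacian p + ((2 * Fintype.card σ + 4 * k : ℕ) : MvPolynomial σ R) * p := by
  classical
  have euler := hp.sum_X_mul_pderiv
  simp only [nsmul_eq_mul] at euler
  simp only [laplacian_mul, laplacian_sqNorm, pderiv_sqNorm, mul_assoc, ← Finset.mul_sum, euler]
  push_cast
  ring

end Operators

lemma fischerInner_linearForm_mul (y : σ → ℝ) (p q : MvPolynomial σ ℝ) :
    fischerInner (linearForm y * p) q = fischerInner p (dirDeriv y q) := by
  simp only [linearForm, dirDeriv_apply, Finset.sum_mul, map_sum, LinearMap.sum_apply]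
  refine sum_congr rfl fun i _ => ?_
  rw [mul_assoc, C_mul', C_mul', map_smul, map_smul, LinearMap.smul_apply, fischerInner_X_mul]

lemma fischerInner_sqNorm_mul (p q : MvPolynomial σ ℝ) :
    fischerInner (sqNorm * p) q = fischerInner p (laplacian q) := by
  simp only [sqNorm, laplacian_apply, Finset.sum_mul, map_sum, LinearMap.sum_apply, sq, mul_assoc,
    fischerInner_X_mul]

lemma fischerInner_one_right (p : MvPolynomial σ ℝ) : fischerInner p 1 = coeff 0 p := by
  rw [← C_1, C_apply, fischerInner_monomial]
  simp [multiFactorial]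

lemma fischerInner_pow_linearForm {p : MvPolynomial σ ℝ} {k : ℕ} (hp : p.IsHomogeneous k)
    (x : σ → ℝ) : fischerInner p (linearForm x ^ k) = k.factorial * eval x p := by
  induction k generalizing p with
  | zero =>
    rw [totalDegree_eq_zero_iff_eq_C.mp ((totalDegree_zero_iff_isHomogeneous σ).mpr hp)]
    simp [fischerInner_one_right]
  | succ k ih =>
    rw [fischerInner_comm, pow_succ', fischerInner_linearForm_mul, fischerInner_comm,
      ih (hp.dirDeriv x), eval_dirDeriv_self hp]
    push_cast [Nat.factorial_succ]
    ring

section Zonal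

/-- The recurrence of `gegenbauer (card σ)` with `t` replaced by `linearForm y` and `1` by `sqNorm`,
so that each term is homogeneous. -/
def zonal (y : σ → ℝ) : ℕ → MvPolynomial σ ℝ
  | 0 => 1
  | 1 => linearForm y
  | k + 2 => C (k + Fintype.card σ - 1 : ℝ)⁻¹ *
      (C (2 * k + Fintype.card σ : ℝ) * (linearForm y * zonal y (k + 1))
        - C (k + 1 : ℝ) * (sqNorm * zonal y k))

@[simp] lemma zonal_zero (y : σ → ℝ) : zonal y 0 = 1 := rfl

@[simp] lemma zonal_one (y : σ → ℝ) : zonal y 1 = linearForm y := rfl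

lemma isHomogeneous_zonal (y : σ → ℝ) : ∀ k, (zonal y k).IsHomogeneous k
  | 0 => isHomogeneous_one _ _
  | 1 => isHomogeneous_linearForm y
  | k + 2 => by
    have hL : (linearForm y * zonal y (k + 1)).IsHomogeneous (1 + (k + 1)) :=
      (isHomogeneous_linearForm y).mul (isHomogeneous_zonal y (k + 1))
    have hR : (sqNorm * zonal y k).IsHomogeneous (2 + k) :=
      isHomogeneous_sqNorm.mul (isHomogeneous_zonal y k)
    rw [show 1 + (k + 1) = k + 2 by omega] at hL
    rw [add_comm] at hR
    rw [zonal]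
    exact ((hL.C_mul _).sub (hR.C_mul _)).C_mul _

lemma eval_zonal {x : σ → ℝ} (hx : x ⬝ᵥ x = 1) (y : σ → ℝ) :
    ∀ k, eval x (zonal y k) = gegenbauer (Fintype.card σ) k (y ⬝ᵥ x)
  | 0 => by simp [zonal, gegenbauer]
  | 1 => by simp [zonal, gegenbauer, eval_linearForm]
  | k + 2 => by
    simp only [zonal, gegenbauer, map_mul, map_sub, eval_C, eval_linearForm, eval_sqNorm, hx,
      eval_zonal hx y (k + 1), eval_zonal hx y k]
    rw [div_eq_inv_mul]
    congr 1 <;> ring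

variable (hσ : 2 ≤ Fintype.card σ)
include hσ

lemma add_card_sub_one_pos (k : ℕ) : (0 : ℝ) < k + Fintype.card σ - 1 := by
  have : (2 : ℝ) ≤ Fintype.card σ := by exact_mod_cast hσ
  linarith [k.cast_nonneg (α := ℝ)]

lemma zonal_recurrence (y : σ → ℝ) (k : ℕ) :
    C (k + Fintype.card σ - 1 : ℝ) * zonal y (k + 2) =
      C (2 * k + Fintype.card σ : ℝ) * (linearForm y * zonal y (k + 1))
        - C (k + 1 : ℝ) * (sqNorm * zonal y k) := by
  rw [zonal, ← mul_assoc, ← C_mul, mul_inv_cancel₀ (add_card_sub_one_pos hσ k).ne', C_1, one_mul]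

lemma dirDeriv_zonal {y : σ → ℝ} (hy : y ⬝ᵥ y = 1) :
    ∀ k, dirDeriv y (zonal y (k + 1)) = C (k + 1 : ℝ) * zonal y k
  | 0 => by simp [dirDeriv_linearForm, hy]
  | 1 => by
    have h := congrArg (dirDeriv y) (zonal_recurrence hσ y 0)
    rw [(dirDeriv y).map_sub, dirDeriv_C_mul, dirDeriv_C_mul, dirDeriv_C_mul] at h
    simp only [Derivation.leibniz, smul_eq_mul, dirDeriv_linearForm, dirDeriv_sqNorm, hy,
      dirDeriv_zonal hy 0, zonal_zero, Derivation.map_one_eq_zero] at h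
    refine mul_left_cancel₀ (C_ne_zero.mpr (by simpa using (add_card_sub_one_pos hσ 0).ne')) ?_
    simp only [map_add, map_sub, map_mul, map_natCast, map_one, map_ofNat, map_zero,
      Nat.cast_zero, Nat.cast_one, zero_add, zonal_one] at h ⊢
    linear_combination h
  | k + 2 => by
    have h := congrArg (dirDeriv y) (zonal_recurrence hσ y (k + 1))
    have h0 := zonal_recurrence hσ y k
    rw [(dirDeriv y).map_sub, dirDeriv_C_mul, dirDeriv_C_mul, dirDeriv_C_mul] at h
    simp only [Derivation.leibniz, smul_eq_mul, dirDeriv_linearForm, dirDeriv_sqNorm, hy,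
      dirDeriv_zonal hy (k + 1), dirDeriv_zonal hy k] at h
    have hn : (k + Fintype.card σ : ℝ) ≠ 0 := by positivity
    refine mul_left_cancel₀ (C_ne_zero.mpr hn) ?_
    simp only [map_add, map_sub, map_mul, map_natCast, map_one, map_ofNat, Nat.cast_add,
      Nat.cast_ofNat, Nat.cast_one, add_assoc, Nat.reduceAdd] at h h0 ⊢
    linear_combination h - (k + 2) * h0

lemma laplacian_zonal {y : σ → ℝ} (hy : y ⬝ᵥ y = 1) : ∀ k, laplacian (zonal y k) = 0
  | 0 => by simp [laplacian_apply]
  | 1 => laplacian_linearForm y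
  | k + 2 => by
    have h := congrArg laplacian (zonal_recurrence hσ y k)
    rw [laplacian.map_sub, laplacian_C_mul, laplacian_C_mul, laplacian_C_mul,
      laplacian_linearForm_mul, laplacian_sqNorm_mul (isHomogeneous_zonal y k),
      laplacian_zonal hy (k + 1), laplacian_zonal hy k, dirDeriv_zonal hσ hy k] at h
    refine mul_left_cancel₀ (C_ne_zero.mpr (add_card_sub_one_pos hσ k).ne') ?_
    simp only [map_add, map_sub, map_mul, map_natCast, map_one, map_ofNat, Nat.cast_add,
      Nat.cast_mul, Nat.cast_ofNat] at h ⊢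
    linear_combination h

lemma exists_linearForm_mul_zonal : ∀ k, ∃ c > (0 : ℝ), ∀ y : σ → ℝ,
    ∃ v, linearForm y * zonal y k = c • zonal y (k + 1) + sqNorm * v
  | 0 => ⟨1, one_pos, fun y => ⟨0, by simp⟩⟩
  | k + 1 => by
    have hb : (0 : ℝ) < 2 * k + Fintype.card σ := by
      have : (2 : ℝ) ≤ Fintype.card σ := by exact_mod_cast hσ
      positivity
    have hC : ∀ a : ℝ, C (2 * k + Fintype.card σ : ℝ) * C (a / (2 * k + Fintype.card σ)) =
        (C a : MvPolynomial σ ℝ) := fun a => by rw [← C_mul, mul_div_cancel₀ _ hb.ne']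
    refine ⟨(k + Fintype.card σ - 1) / (2 * k + Fintype.card σ),
      div_pos (add_card_sub_one_pos hσ k) hb, fun y =>
        ⟨C ((k + 1 : ℝ) / (2 * k + Fintype.card σ)) * zonal y k, ?_⟩⟩
    -- solve the recurrence for `linearForm y * zonal y (k + 1)`
    refine mul_left_cancel₀ (C_ne_zero.mpr hb.ne') ?_
    rw [smul_eq_C_mul]
    linear_combination -zonal_recurrence hσ y k - zonal y (k + 2) * hC (k + Fintype.card σ - 1)
      - sqNorm * zonal y k * hC (k + 1)

lemma exists_pow_linearForm_eq (k : ℕ) :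
    ∃ c > (0 : ℝ), ∀ y : σ → ℝ, ∃ v, linearForm y ^ k = c • zonal y k + sqNorm * v := by
  induction k with
  | zero => exact ⟨1, one_pos, fun y => ⟨0, by simp⟩⟩
  | succ k ih =>
    obtain ⟨c, hc, hcy⟩ := ih
    obtain ⟨d, hd, hdy⟩ := exists_linearForm_mul_zonal hσ k
    refine ⟨c * d, mul_pos hc hd, fun y => ?_⟩
    obtain ⟨v, hv⟩ := hcy y
    obtain ⟨w, hw⟩ := hdy y
    refine ⟨C c * w + linearForm y * v, ?_⟩
    rw [pow_succ', hv]
    simp only [smul_eq_C_mul, C_mul] at hw ⊢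
    linear_combination C c * hw

end Zonal

end MvPolynomial

open MvPolynomial in
theorem exists_gegenbauer_inner_eq_mul_fischerInner {σ : Type*} [Fintype σ]
    (hσ : 2 ≤ Fintype.card σ) (k : ℕ) :
    ∃ c > (0 : ℝ), ∀ x y : EuclideanSpace ℝ σ, ‖x‖ = 1 → ‖y‖ = 1 →
      gegenbauer (Fintype.card σ) k ⟪x, y⟫ =
        c * fischerInner (zonal x.ofLp k) (zonal y.ofLp k) := by
  have dotProduct_self : ∀ x : EuclideanSpace ℝ σ, ‖x‖ = 1 → x.ofLp ⬝ᵥ x.ofLp = 1 := by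
    intro x hx
    have := real_inner_self_eq_norm_sq x
    rwa [EuclideanSpace.inner_eq_star_dotProduct, star_trivial, hx, one_pow] at this
  obtain ⟨c, hc, hdecomp⟩ := exists_pow_linearForm_eq hσ k
  refine ⟨c / k.factorial, by positivity, fun x y hx hy => ?_⟩
  obtain ⟨v, hv⟩ := hdecomp x.ofLp
  have h := fischerInner_pow_linearForm (isHomogeneous_zonal y.ofLp k) x.ofLp
  -- `zonal y` is harmonic, hence orthogonal to `sqNorm * v`
  rw [hv, map_add, map_smul, fischerInner_comm _ (sqNorm * v), fischerInner_sqNorm_mul,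
    laplacian_zonal hσ (dotProduct_self y hy), map_zero, add_zero,
    eval_zonal (dotProduct_self x hx), fischerInner_comm, smul_eq_mul] at h
  rw [EuclideanSpace.inner_eq_star_dotProduct, star_trivial, div_mul_eq_mul_div, h,
    mul_div_cancel_left₀ _ (by positivity)]

end

theorem stmt3_general (n : ℕ) (hn : 2 ≤ n) (k : ℕ)
    (C : Finset (EuclideanSpace ℝ (Fin n))) (hC : ∀ x ∈ C, ‖x‖ = 1) :
    0 ≤ ∑ x ∈ C, ∑ y ∈ C, gegenbauer n k ⟪x, y⟫ := by
  obtain ⟨c, hc, hG⟩ :=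
    exists_gegenbauer_inner_eq_mul_fischerInner (σ := Fin n) (by simpa using hn) k
  rw [Fintype.card_fin] at hG
  set Z := ∑ x ∈ C, MvPolynomial.zonal x.ofLp k
  calc 0 ≤ c * MvPolynomial.fischerInner Z Z :=
        mul_nonneg hc.le (MvPolynomial.fischerInner_self_nonneg Z)
    _ = ∑ x ∈ C, ∑ y ∈ C, gegenbauer n k ⟪x, y⟫ := by
      simp only [Z, map_sum, LinearMap.sum_apply, Finset.mul_sum]
      exact Finset.sum_congr rfl fun x hx => Finset.sum_congr rfl fun y hy => by
        rw [hG x y (hC x hx) (hC y hy), MvPolynomial.fischerInner_comm]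

/-- Schoenberg/Delsarte positivity of Gegenbauer sums. -/
theorem stmt3 (n : ℕ) (hn : 2 ≤ n) (k : ℕ) (hk : 1 ≤ k)
    (C : Finset (EuclideanSpace ℝ (Fin n))) (hC : ∀ x ∈ C, ‖x‖ = 1) :
    0 ≤ ∑ x ∈ C, ∑ y ∈ C, gegenbauer n k ⟪x, y⟫ :=
  stmt3_general n hn k C hC
end

section
/- Let C be a spherical two-distance set in ℝ^n with inner product values a and b, a > b. If |C| ≥ 2n+3, then (1−b)/(a−b) is an integer k satisfying 2 ≤ k ≤ ⌊(1+√(2n))/2⌋; equivalently b = (ka−1)/(k−1) for such an integer k. -/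
/-!
Let `N = |C|`, `k = (1 - b) / (a - b)`, and let `A` be the adjacency matrix of the graph joining
the pairs of `C` with inner product `a`. The Gram matrix of `C` is `(1 - b) I + (a - b) A + b J`,
so every affine dependency `v` of `C` (`∑ vₓ x = 0`, `∑ vₓ = 0`) satisfies `A v = -k v`. These
form a space of dimension `m ≥ N - n - 1 > N / 2`. Hence `-k` is an eigenvalue of the integer
matrix `A` of multiplicity more than half its size; its conjugates would have the same
multiplicity, so it is rational, and being an algebraic integer it is an integer.

For the bound, the Seidel matrix `S = J - I - 2A` has trace `0`, `tr S² = N (N - 1)` and the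
eigenvalue `2k - 1` on the same `m`-dimensional space. Cauchy–Schwarz applied to its remaining
eigenvalues gives `(2k - 1)² m ≤ (N - 1)(N - m)`, which together with `N ≥ 2n + 3` forces
`(2k - 1)² ≤ 2n`.
-/

open Module Matrix Polynomial RealInnerProductSpace SimpleGraph

theorem minpoly_pow_dvd_of_le_rootMultiplicity {K L : Type*} [Field K] [PerfectField K] [Field L]
    [Algebra K L] {α : L} (hα : IsIntegral K α) {m : ℕ} {p : K[X]} (hp : p ≠ 0)
    (hm : m ≤ (p.map (algebraMap K L)).rootMultiplicity α) : minpoly K α ^ m ∣ p := by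
  induction m generalizing p with
  | zero => simp
  | succ m ih =>
    have hroot : aeval α p = 0 := by
      rw [aeval_def, eval₂_eq_eval_map]
      exact (rootMultiplicity_pos (map_ne_zero hp)).mp (by omega)
    obtain ⟨q, rfl⟩ := minpoly.dvd K α hroot
    have hsimple : ((minpoly K α).map (algebraMap K L)).rootMultiplicity α ≤ 1 :=
      rootMultiplicity_le_one_of_separable
        (PerfectField.separable_of_irreducible (minpoly.irreducible hα)).map α
    rw [Polynomial.map_mul,
      rootMultiplicity_mul (by rw [← Polynomial.map_mul]; exact map_ne_zero hp)] at hm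
    rw [pow_succ']
    exact mul_dvd_mul_left _ (ih (right_ne_zero_of_mul hp) (by omega))

theorem exists_intCast_eq_of_natDegree_lt_two_mul_rootMultiplicity {L : Type*} [Field L]
    [CharZero L] {p : ℤ[X]} (hp : p.Monic) {α : L}
    (h : p.natDegree < 2 * (p.map (Int.castRingHom L)).rootMultiplicity α) :
    ∃ z : ℤ, α = z := by
  set m := (p.map (Int.castRingHom L)).rootMultiplicity α
  have hpQ : (p.map (Int.castRingHom ℚ)).map (algebraMap ℚ L) = p.map (Int.castRingHom L) := by
    rw [Polynomial.map_map]; congr 1; ext; simp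
  have hroot : (p.map (Int.castRingHom L)).IsRoot α :=
    (rootMultiplicity_pos (hp.map _).ne_zero).mp (by omega)
  have hαZ : IsIntegral ℤ α := ⟨p, hp, by rwa [eval₂_eq_eval_map]⟩
  have hαQ : IsIntegral ℚ α := hαZ.tower_top
  have hdvd : minpoly ℚ α ^ m ∣ p.map (Int.castRingHom ℚ) :=
    minpoly_pow_dvd_of_le_rootMultiplicity hαQ (hp.map _).ne_zero (by rw [hpQ])
  have hdeg : m * (minpoly ℚ α).natDegree ≤ p.natDegree := by
    simpa [natDegree_pow, hp.natDegree_map] using natDegree_le_of_dvd hdvd (hp.map _).ne_zero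
  obtain ⟨q, rfl⟩ : α ∈ (algebraMap ℚ L).range := by
    by_contra hα
    have := Nat.mul_le_mul_left m ((minpoly.two_le_natDegree_iff hαQ).mpr hα)
    omega
  have hqZ : IsIntegral ℤ q :=
    (isIntegral_algHom_iff ((Algebra.ofId ℚ L).restrictScalars ℤ) (algebraMap ℚ L).injective).mp hαZ
  obtain ⟨z, rfl⟩ := IsIntegrallyClosed.isIntegral_iff.mp hqZ
  exact ⟨z, by simp⟩

theorem Matrix.exists_intCast_eq_of_card_lt_two_mul_finrank {ι L : Type*} [Fintype ι]
    [DecidableEq ι] [Field L] [CharZero L] (A : Matrix ι ι ℤ) {α : L} {W : Submodule L (ι → L)}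
    (hW : ∀ v ∈ W, A.map (Int.castRingHom L) *ᵥ v = α • v) (h : Fintype.card ι < 2 * finrank L W) :
    ∃ z : ℤ, α = z := by
  refine exists_intCast_eq_of_natDegree_lt_two_mul_rootMultiplicity A.charpoly_monic ?_
  have hWle : W ≤ Module.End.eigenspace (A.map (Int.castRingHom L)).toLin' α := fun v hv => by
    simpa [Module.End.mem_eigenspace_iff] using hW v hv
  have hmult := (Submodule.finrank_mono hWle).trans
    (LinearMap.finrank_eigenspace_le (A.map (Int.castRingHom L)).toLin' α)
  rw [Matrix.charpoly_toLin', charpoly_map] at hmult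
  rw [charpoly_natDegree_eq_dim]
  omega

section TraceBound

variable {ι : Type*} [Fintype ι]

theorem Matrix.trace_sq_le_trace_mul_trace_mul_self {R P : Matrix ι ι ℝ} (hR : R.IsSymm)
    (hP : P.IsSymm) (hPP : P * P = P) (hRP : R * P = R) :
    R.trace ^ 2 ≤ P.trace * (R * R).trace := by
  have hPR : P * R = R := by
    simpa [transpose_mul, hR.eq, hP.eq] using congrArg transpose hRP
  have hquad : ∀ s : ℝ, 0 ≤ P.trace * (s * s) + (-2 * R.trace) * s + (R * R).trace := by
    intro s
    have h := (posSemidef_conjTranspose_mul_self (R - s • P)).trace_nonneg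
    rw [conjTranspose_eq_transpose_of_trivial, transpose_sub, transpose_smul, hR.eq,
      hP.eq] at h
    simp only [sub_mul, mul_sub, Matrix.smul_mul, Matrix.mul_smul, hPP, hRP, hPR, smul_smul,
      trace_sub, trace_smul, smul_eq_mul] at h
    linarith
  have := discrim_le_zero hquad
  rw [discrim] at this
  linarith

variable [DecidableEq ι]

theorem Submodule.exists_isSymm_idempotent_matrix (W : Submodule ℝ (ι → ℝ)) :
    ∃ Q : Matrix ι ι ℝ, Q.IsSymm ∧ Q * Q = Q ∧ Q.trace = finrank ℝ W ∧ ∀ v, Q *ᵥ v ∈ W := by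
  let W' := W.map (WithLp.linearEquiv 2 ℝ (ι → ℝ)).symm.toLinearMap
  obtain ⟨Q, hQ⟩ :=
    toEuclideanLin.surjective (W'.starProjection : Module.End ℝ (EuclideanSpace ℝ ι))
  have hP : LinearMap.IsProj W' (toEuclideanLin Q) := by
    rw [hQ]
    exact ⟨W'.starProjection_apply_mem, fun x hx => W'.starProjection_eq_self_iff.mpr hx⟩
  refine ⟨Q, ?_, ?_, ?_, fun v => ?_⟩
  · have := isSymmetric_toEuclideanLin_iff.mp (hQ ▸ W'.starProjection_isSymmetric)
    rwa [IsHermitian, conjTranspose_eq_transpose_of_trivial] at this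
  · apply toEuclideanLin.injective
    rw [toLpLin_mul_same, hQ]
    exact congrArg ContinuousLinearMap.toLinearMap W'.isIdempotentElem_starProjection
  · rw [← trace_toLin_eq Q (EuclideanSpace.basisFun ι ℝ).toBasis,
      ← toEuclideanLin_eq_toLin_orthonormal, hP.trace, LinearEquiv.finrank_map_eq]
  · obtain ⟨w, hw, hwv⟩ := Submodule.mem_map.mp (hP.map_mem (WithLp.toLp 2 v))
    have : w = Q *ᵥ v := congrArg WithLp.ofLp hwv
    rwa [← this]

theorem Matrix.sq_trace_sub_le_of_mulVec_eq_smul {D : Matrix ι ι ℝ} {μ : ℝ}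
    {W : Submodule ℝ (ι → ℝ)} (hD : D.IsSymm) (hW : ∀ v ∈ W, D *ᵥ v = μ • v) :
    (D.trace - μ * finrank ℝ W) ^ 2 ≤
      (Fintype.card ι - finrank ℝ W) * ((D * D).trace - μ ^ 2 * finrank ℝ W) := by
  obtain ⟨Q, hQ, hQQ, hQtr, hQW⟩ := W.exists_isSymm_idempotent_matrix
  have hDQ : D * Q = μ • Q := by
    refine mulVec_injective (funext fun v => ?_)
    rw [← mulVec_mulVec, hW _ (hQW v), smul_mulVec]
  have hQD : Q * D = μ • Q := by
    simpa [transpose_mul, hD.eq, hQ.eq] using congrArg transpose hDQ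
  have h := trace_sq_le_trace_mul_trace_mul_self (R := D - μ • Q) (P := 1 - Q)
    (hD.sub (hQ.smul μ)) (isSymm_one.sub hQ) (by simp [sub_mul, mul_sub, hQQ])
    (by simp [sub_mul, mul_sub, hQQ, hDQ])
  simp only [sub_mul, mul_sub, Matrix.smul_mul, Matrix.mul_smul, hQQ, hDQ, hQD, smul_smul,
    trace_sub, trace_smul, trace_one, smul_eq_mul] at h
  rw [← hQtr]
  convert h using 2
  ring

end TraceBound

namespace SimpleGraph

variable {V : Type*} [DecidableEq V] (G : SimpleGraph V) [DecidableRel G.Adj]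

def seidelMatrix (R : Type*) [Ring R] : Matrix V V R :=
  of fun i j => if i = j then 0 else if G.Adj i j then -1 else 1

variable {R : Type*} [Ring R]

theorem isSymm_seidelMatrix : (G.seidelMatrix R).IsSymm := by
  ext i j
  simp [seidelMatrix, eq_comm, G.adj_comm]

theorem seidelMatrix_eq :
    G.seidelMatrix R = of (fun _ _ => 1) - 1 - (2 : R) • G.adjMatrix R := by
  ext i j
  by_cases hij : i = j
  · simp [seidelMatrix, hij]
  · by_cases hadj : G.Adj i j <;> simp [seidelMatrix, hij, hadj, one_apply_ne hij]
    norm_num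

variable [Fintype V]

theorem trace_seidelMatrix : (G.seidelMatrix R).trace = 0 := by
  simp [trace, seidelMatrix]

theorem trace_seidelMatrix_mul_self :
    (G.seidelMatrix R * G.seidelMatrix R).trace = Fintype.card V * (Fintype.card V - 1) := by
  have hdiag : ∀ i, (G.seidelMatrix R * G.seidelMatrix R) i i = Fintype.card V - 1 := by
    intro i
    have hentry : ∀ j, G.seidelMatrix R i j * G.seidelMatrix R j i = if i = j then 0 else 1 := by
      intro j
      by_cases hij : i = j
      · simp [seidelMatrix, hij]
      · by_cases hadj : G.Adj i j <;> simp [seidelMatrix, hij, Ne.symm hij, hadj, G.adj_comm]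
    have hcard : 1 ≤ Fintype.card V := Fintype.card_pos_iff.mpr ⟨i⟩
    simp [mul_apply, hentry, Finset.sum_ite, ← ne_eq, Finset.filter_ne, hcard]
  simp [trace, hdiag, mul_sub]

end SimpleGraph

section AffineDependencies

variable {ι E : Type*} [Fintype ι] [AddCommGroup E] [Module ℝ E]

def affineDependencies (x : ι → E) : Submodule ℝ (ι → ℝ) :=
  LinearMap.ker (Fintype.linearCombination ℝ fun i => (x i, (1 : ℝ)))

theorem mem_affineDependencies {x : ι → E} {v : ι → ℝ} :
    v ∈ affineDependencies x ↔ ∑ i, v i • x i = 0 ∧ ∑ i, v i = 0 := by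
  simp [affineDependencies, Fintype.linearCombination_apply, Prod.ext_iff, Prod.fst_sum,
    Prod.snd_sum]

theorem card_le_finrank_affineDependencies_add [FiniteDimensional ℝ E] (x : ι → E) :
    Fintype.card ι ≤ finrank ℝ (affineDependencies x) + finrank ℝ E + 1 := by
  have h := LinearMap.finrank_range_add_finrank_ker
    (Fintype.linearCombination ℝ fun i => (x i, (1 : ℝ)))
  have hrange := Submodule.finrank_le
    (LinearMap.range (Fintype.linearCombination ℝ fun i => (x i, (1 : ℝ))))
  rw [finrank_prod, finrank_self] at hrange
  rw [finrank_fintype_fun_eq_card] at h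
  rw [affineDependencies]
  omega

theorem ones_mulVec_of_mem_affineDependencies {x : ι → E} {v : ι → ℝ}
    (hv : v ∈ affineDependencies x) :
    (of fun _ _ => 1 : Matrix ι ι ℝ) *ᵥ v = 0 := by
  ext i
  simpa [mulVec, dotProduct] using (mem_affineDependencies.mp hv).2

end AffineDependencies

section TwoDistance

variable {ι E : Type*} [NormedAddCommGroup E] [InnerProductSpace ℝ E]

def innerEqGraph (x : ι → E) (a : ℝ) : SimpleGraph ι where
  Adj i j := i ≠ j ∧ ⟪x i, x j⟫ = a
  symm := ⟨fun _ _ h => ⟨h.1.symm, real_inner_comm (x _) (x _) ▸ h.2⟩⟩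
  loopless := ⟨fun _ h => h.1 rfl⟩

@[simp]
theorem innerEqGraph_adj {x : ι → E} {a : ℝ} {i j : ι} :
    (innerEqGraph x a).Adj i j ↔ i ≠ j ∧ ⟪x i, x j⟫ = a :=
  Iff.rfl

theorem gram_mulVec_of_mem_affineDependencies [Fintype ι] {x : ι → E} {v : ι → ℝ}
    (hv : v ∈ affineDependencies x) :
    gram ℝ x *ᵥ v = 0 := by
  ext i
  have h : ⟪x i, ∑ j, v j • x j⟫ = 0 := by rw [(mem_affineDependencies.mp hv).1, inner_zero_right]
  simpa [mulVec, dotProduct, gram_apply, inner_sum, real_inner_smul_right, mul_comm] using h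

variable [DecidableEq ι] {x : ι → E} {a b : ℝ} [DecidableRel (innerEqGraph x a).Adj]

theorem gram_eq_of_inner_eq_or_eq (hx : ∀ i, ‖x i‖ = 1) (hab : b ≠ a)
    (h2 : ∀ i j, i ≠ j → ⟪x i, x j⟫ = a ∨ ⟪x i, x j⟫ = b) :
    gram ℝ x = (a - b) • (innerEqGraph x a).adjMatrix ℝ + (1 - b) • 1 + b • of fun _ _ => 1 := by
  ext i j
  by_cases hij : i = j
  · subst hij
    simp [gram_apply, hx]
  · rcases h2 i j hij with h | h <;> simp [gram_apply, hij, h, hab]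

variable [Fintype ι]

theorem adjMatrix_mulVec_of_mem_affineDependencies (hx : ∀ i, ‖x i‖ = 1) (hab : b < a)
    (h2 : ∀ i j, i ≠ j → ⟪x i, x j⟫ = a ∨ ⟪x i, x j⟫ = b) {v : ι → ℝ}
    (hv : v ∈ affineDependencies x) :
    (innerEqGraph x a).adjMatrix ℝ *ᵥ v = (-((1 - b) / (a - b))) • v := by
  have h := gram_mulVec_of_mem_affineDependencies hv
  rw [gram_eq_of_inner_eq_or_eq hx hab.ne h2, add_mulVec, add_mulVec, smul_mulVec, smul_mulVec,
    smul_mulVec, one_mulVec, ones_mulVec_of_mem_affineDependencies hv] at h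
  ext i
  have hi := congrFun h i
  simp only [Pi.add_apply, Pi.smul_apply, smul_eq_mul, Pi.zero_apply] at hi ⊢
  have := (sub_pos.mpr hab).ne'
  field_simp
  linarith

theorem seidelMatrix_mulVec_of_mem_affineDependencies (hx : ∀ i, ‖x i‖ = 1) (hab : b < a)
    (h2 : ∀ i j, i ≠ j → ⟪x i, x j⟫ = a ∨ ⟪x i, x j⟫ = b) {v : ι → ℝ}
    (hv : v ∈ affineDependencies x) :
    (innerEqGraph x a).seidelMatrix ℝ *ᵥ v = (2 * ((1 - b) / (a - b)) - 1) • v := by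
  rw [seidelMatrix_eq, sub_mulVec, sub_mulVec, smul_mulVec, one_mulVec,
    ones_mulVec_of_mem_affineDependencies hv,
    adjMatrix_mulVec_of_mem_affineDependencies hx hab h2 hv]
  module

end TwoDistance

theorem sq_lt_of_sq_mul_le {ℓ m N n : ℝ} (hℓ : 1 < ℓ) (hn : 0 ≤ n) (hN : 2 * n + 3 ≤ N)
    (hm : N ≤ m + n + 1)
    (h : (ℓ * m) ^ 2 ≤ (N - m) * (N * (N - 1) - ℓ ^ 2 * m)) :
    ℓ ^ 2 < 2 * n + 1 := by
  have hℓm : ℓ ^ 2 * m ≤ (N - 1) * (N - m) := by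
    have : N * (ℓ ^ 2 * m) ≤ N * ((N - 1) * (N - m)) := by nlinarith
    exact le_of_mul_le_mul_left this (by linarith)
  by_contra! hcon
  have : ℓ ^ 2 * (N - n - 1) ≤ (N - 1) * (n + 1) :=
    calc ℓ ^ 2 * (N - n - 1) ≤ ℓ ^ 2 * m := by gcongr; linarith
      _ ≤ (N - 1) * (N - m) := hℓm
      _ ≤ (N - 1) * (n + 1) := by gcongr <;> linarith
  nlinarith

theorem one_lt_div_sub {a b : ℝ} (hab : b < a) (ha : a < 1) : 1 < (1 - b) / (a - b) := by
  rw [one_lt_div (sub_pos.2 hab)]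
  linarith

section TwoDistanceSet

variable {ι E : Type*} [Fintype ι] [NormedAddCommGroup E] [InnerProductSpace ℝ E]
  [FiniteDimensional ℝ E] {x : ι → E} {a b : ℝ}

theorem exists_intCast_eq_of_two_mul_finrank_add_three_le (hx : ∀ i, ‖x i‖ = 1) (hab : b < a)
    (h2 : ∀ i j, i ≠ j → ⟪x i, x j⟫ = a ∨ ⟪x i, x j⟫ = b)
    (hcard : 2 * finrank ℝ E + 3 ≤ Fintype.card ι) :
    ∃ z : ℤ, (1 - b) / (a - b) = z := by
  classical
  have hmap : ((innerEqGraph x a).adjMatrix ℤ).map (Int.castRingHom ℝ) =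
      (innerEqGraph x a).adjMatrix ℝ := by
    ext; simp [adjMatrix_apply]
  have hW := card_le_finrank_affineDependencies_add x
  obtain ⟨z, hz⟩ := ((innerEqGraph x a).adjMatrix ℤ).exists_intCast_eq_of_card_lt_two_mul_finrank
    (fun v hv => by rw [hmap, adjMatrix_mulVec_of_mem_affineDependencies hx hab h2 hv]) (by omega)
  exact ⟨-z, by push_cast; linarith⟩

theorem sq_two_mul_sub_one_lt_of_two_mul_finrank_add_three_le (hx : ∀ i, ‖x i‖ = 1)
    (hab : b < a) (ha : a < 1) (h2 : ∀ i j, i ≠ j → ⟪x i, x j⟫ = a ∨ ⟪x i, x j⟫ = b)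
    (hcard : 2 * finrank ℝ E + 3 ≤ Fintype.card ι) :
    (2 * ((1 - b) / (a - b)) - 1) ^ 2 < 2 * finrank ℝ E + 1 := by
  classical
  have hS := sq_trace_sub_le_of_mulVec_eq_smul (isSymm_seidelMatrix _)
    (fun v hv => seidelMatrix_mulVec_of_mem_affineDependencies hx hab h2 hv)
  rw [trace_seidelMatrix, trace_seidelMatrix_mul_self, zero_sub, neg_sq] at hS
  exact sq_lt_of_sq_mul_le (by linarith [one_lt_div_sub hab ha]) (Nat.cast_nonneg _)
    (by exact_mod_cast hcard) (by exact_mod_cast card_le_finrank_affineDependencies_add x) hS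

end TwoDistanceSet

theorem stmt7_general (n : ℕ) (C : Finset (EuclideanSpace ℝ (Fin n)))
    (hC : ∀ x ∈ C, ‖x‖ = 1) (a b : ℝ) (hba : b < a)
    (h2 : ∀ x ∈ C, ∀ y ∈ C, x ≠ y → ⟪x, y⟫ = a ∨ ⟪x, y⟫ = b)
    (hatt_a : ∃ x ∈ C, ∃ y ∈ C, x ≠ y ∧ ⟪x, y⟫ = a)
    (hcard : 2 * n + 3 ≤ C.card) :
    ∃ k : ℕ, 2 ≤ k ∧ (k : ℝ) ≤ (1 + Real.sqrt (2 * n)) / 2 ∧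
      (1 - b) / (a - b) = (k : ℝ) ∧ b = ((k : ℝ) * a - 1) / ((k : ℝ) - 1) := by
  obtain ⟨x₀, hx₀, y₀, hy₀, hne, rfl⟩ := hatt_a
  have ha : ⟪x₀, y₀⟫ < 1 := (inner_lt_one_iff_real_of_norm_eq_one (hC x₀ hx₀) (hC y₀ hy₀)).mpr hne
  let x : C → EuclideanSpace ℝ (Fin n) := (↑)
  have hx : ∀ i, ‖x i‖ = 1 := fun i => hC i i.2
  have hx2 : ∀ i j, i ≠ j → ⟪x i, x j⟫ = ⟪x₀, y₀⟫ ∨ ⟪x i, x j⟫ = b :=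
    fun i j hij => h2 i i.2 j j.2 (Subtype.coe_ne_coe.2 hij)
  have hcard' : 2 * finrank ℝ (EuclideanSpace ℝ (Fin n)) + 3 ≤ Fintype.card C := by
    simpa using hcard
  obtain ⟨z, hz⟩ := exists_intCast_eq_of_two_mul_finrank_add_three_le hx hba hx2 hcard'
  have hlt := sq_two_mul_sub_one_lt_of_two_mul_finrank_add_three_le hx hba ha hx2 hcard'
  have hk := one_lt_div_sub hba ha
  rw [hz] at hk hlt
  obtain ⟨j, rfl⟩ := Int.eq_ofNat_of_zero_le (by exact_mod_cast zero_le_one.trans hk.le : 0 ≤ z)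
  simp only [Int.cast_natCast, finrank_euclideanSpace_fin] at hk hlt hz
  have hsq : (2 * (j : ℝ) - 1) ^ 2 ≤ 2 * n := by
    have : (2 * (j : ℤ) - 1) ^ 2 < 2 * n + 1 := by exact_mod_cast hlt
    exact_mod_cast Int.lt_add_one_iff.mp this
  refine ⟨j, by exact_mod_cast hk, ?_, hz, ?_⟩
  · linarith [(Real.le_sqrt (by linarith) (by positivity)).mpr hsq]
  · rw [eq_div_iff (by linarith), ← hz]
    field_simp [(sub_pos.2 hba).ne']
    ring

/-- Larman–Rogers–Seidel theorem. -/
theorem stmt7 (n : ℕ) (C : Finset (EuclideanSpace ℝ (Fin n)))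
    (hC : ∀ x ∈ C, ‖x‖ = 1) (a b : ℝ) (hba : b < a)
    (h2 : ∀ x ∈ C, ∀ y ∈ C, x ≠ y → ⟪x, y⟫ = a ∨ ⟪x, y⟫ = b)
    (hatt_a : ∃ x ∈ C, ∃ y ∈ C, x ≠ y ∧ ⟪x, y⟫ = a)
    (hatt_b : ∃ x ∈ C, ∃ y ∈ C, x ≠ y ∧ ⟪x, y⟫ = b)
    (hcard : 2 * n + 3 ≤ C.card) :
    ∃ k : ℕ, 2 ≤ k ∧ (k : ℝ) ≤ (1 + Real.sqrt (2 * n)) / 2 ∧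
      (1 - b) / (a - b) = (k : ℝ) ∧ b = ((k : ℝ) * a - 1) / ((k : ℝ) - 1) :=
  stmt7_general n C hC a b hba h2 hatt_a hcard
end

section
/- Any set of unit vectors in ℝ^n all of whose pairwise inner products are negative has cardinality at most n+1. -/
/-!
Drop one vector `z` of the set. The remaining vectors are pairwise obtuse and all lie in the open
half-space `⟪·, z⟫ < 0`, and such a family is linearly independent: split a vanishing relation
`∑ gᵢ vᵢ = 0` by the signs of the coefficients as `p = q` with `p = ∑ gᵢ⁺ vᵢ`, `q = ∑ gᵢ⁻ vᵢ`.
Pairwise obtuseness gives `‖p‖² = ⟪p, q⟫ ≤ 0`, so `p = q = 0`, and pairing with `z` then forces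
every coefficient to vanish. Hence at most `n` vectors remain.
-/

open RealInnerProductSpace Finset

section ObtuseFamily

variable {ι E : Type*} [NormedAddCommGroup E] [InnerProductSpace ℝ E] {v : ι → E}

lemma inner_sum_smul_sum_smul_nonpos (hv : Pairwise fun i j ↦ ⟪v i, v j⟫ ≤ 0) (s : Finset ι)
    {a b : ι → ℝ} (ha : 0 ≤ a) (hb : 0 ≤ b) (hab : ∀ i, a i * b i = 0) :
    ⟪∑ i ∈ s, a i • v i, ∑ j ∈ s, b j • v j⟫ ≤ 0 := by
  rw [sum_inner]
  refine sum_nonpos fun i _ ↦ ?_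
  rw [inner_sum]
  refine sum_nonpos fun j _ ↦ ?_
  rw [real_inner_smul_left, real_inner_smul_right, ← mul_assoc]
  rcases eq_or_ne i j with rfl | hij
  · simp [hab]
  · exact mul_nonpos_of_nonneg_of_nonpos (mul_nonneg (ha i) (hb j)) (hv hij)

lemma eq_zero_of_sum_smul_eq_zero_of_inner_neg {z : E} (hz : ∀ i, ⟪v i, z⟫ < 0) {s : Finset ι}
    {a : ι → ℝ} (ha : 0 ≤ a) (h : ∑ i ∈ s, a i • v i = 0) : ∀ i ∈ s, a i = 0 := by
  have hsum : ∑ i ∈ s, a i * ⟪v i, z⟫ = 0 := by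
    simpa [sum_inner, real_inner_smul_left] using congr_arg (⟪·, z⟫) h
  intro i hi
  have hterm := (sum_eq_zero_iff_of_nonpos fun j _ ↦
    mul_nonpos_of_nonneg_of_nonpos (ha j) (hz j).le).mp hsum i hi
  exact (mul_eq_zero.mp hterm).resolve_right (hz i).ne

lemma linearIndependent_of_pairwise_inner_nonpos_of_inner_neg
    (hv : Pairwise fun i j ↦ ⟪v i, v j⟫ ≤ 0) {z : E} (hz : ∀ i, ⟪v i, z⟫ < 0) :
    LinearIndependent ℝ v := by
  rw [linearIndependent_iff']
  intro s g hg
  set p := ∑ i ∈ s, (g i)⁺ • v i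
  set q := ∑ i ∈ s, (g i)⁻ • v i
  have hpos : (0 : ι → ℝ) ≤ fun i ↦ (g i)⁺ := fun i ↦ posPart_nonneg (g i)
  have hneg : (0 : ι → ℝ) ≤ fun i ↦ (g i)⁻ := fun i ↦ negPart_nonneg (g i)
  have hpq : p = q := by
    rw [← sub_eq_zero, ← hg, ← sum_sub_distrib]
    simp only [← sub_smul, posPart_sub_negPart]
  have hdisj : ∀ i, (g i)⁺ * (g i)⁻ = 0 := fun i ↦ by
    rcases le_total 0 (g i) with h | h <;> simp [h]
  have hp : p = 0 := by
    refine real_inner_self_nonpos.mp ?_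
    nth_rewrite 2 [hpq]
    exact inner_sum_smul_sum_smul_nonpos hv s hpos hneg hdisj
  have hq : q = 0 := hpq ▸ hp
  intro i hi
  rw [← posPart_sub_negPart (g i),
    eq_zero_of_sum_smul_eq_zero_of_inner_neg hz hpos hp i hi,
    eq_zero_of_sum_smul_eq_zero_of_inner_neg hz hneg hq i hi, sub_zero]

theorem Finset.card_le_finrank_add_one_of_pairwise_inner_neg [FiniteDimensional ℝ E]
    (C : Finset E) (hC : ∀ x ∈ C, ∀ y ∈ C, x ≠ y → ⟪x, y⟫ < 0) :
    C.card ≤ Module.finrank ℝ E + 1 := by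
  classical
  rcases C.eq_empty_or_nonempty with rfl | ⟨z, hz⟩
  · simp
  have hindep : LinearIndependent ℝ (fun x ↦ x : C.erase z → E) := by
    refine linearIndependent_of_pairwise_inner_nonpos_of_inner_neg (z := z) ?_ fun x ↦ ?_
    · intro x y hxy
      exact (hC x (mem_of_mem_erase x.2) y (mem_of_mem_erase y.2) (Subtype.coe_ne_coe.mpr hxy)).le
    · exact hC x (mem_of_mem_erase x.2) z hz (ne_of_mem_erase x.2)
  have := hindep.finset_card_le_finrank
  rw [card_erase_of_mem hz] at this
  omega

end ObtuseFamily

theorem stmt9_general (n : ℕ) (C : Finset (EuclideanSpace ℝ (Fin n)))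
    (hneg : ∀ x ∈ C, ∀ y ∈ C, x ≠ y → ⟪x, y⟫ < 0) :
    C.card ≤ n + 1 := by
  simpa using C.card_le_finrank_add_one_of_pairwise_inner_neg hneg

/-- Rankin-type bound: unit vectors with pairwise negative inner products. -/
theorem stmt9 (n : ℕ) (C : Finset (EuclideanSpace ℝ (Fin n)))
    (hC : ∀ x ∈ C, ‖x‖ = 1)
    (hneg : ∀ x ∈ C, ∀ y ∈ C, x ≠ y → ⟪x, y⟫ < 0) :
    C.card ≤ n + 1 :=
  stmt9_general n C hneg
end

section
/- Any set of unit vectors in ℝ^n all of whose pairwise inner products are at most 0 has cardinality at most 2n. -/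
/-!
Induction on the dimension, for nonzero (rather than unit) vectors so that no renormalisation is
needed. Fix `x ∈ S` and project the other vectors onto `xᗮ`. Since
`⟪P y, P z⟫ = ⟪y, z⟫ - ⟪x, y⟫ * ⟪x, z⟫ / ‖x‖ ^ 2` and both inner products with `x` are `≤ 0`, the
projections are still pairwise obtuse; they are also pairwise distinct, so after discarding the
possible projection `0` at most two vectors (`x` and one negative multiple of `x`) are lost.
-/

open RealInnerProductSpace Module

section ObtuseProjection

variable {E : Type*} [NormedAddCommGroup E] [InnerProductSpace ℝ E]

theorem inner_starProjection_orthogonal_span_singleton (x y z : E) :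
    ⟪(ℝ ∙ x)ᗮ.starProjection y, (ℝ ∙ x)ᗮ.starProjection z⟫ =
      ⟪y, z⟫ - ⟪x, y⟫ * ⟪x, z⟫ / ‖x‖ ^ 2 := by
  rcases eq_or_ne x 0 with rfl | hx
  · simp [Submodule.starProjection_top]
  have hx' : ‖x‖ ≠ 0 := norm_ne_zero_iff.mpr hx
  simp only [Submodule.starProjection_orthogonal_val, Submodule.starProjection_singleton,
    inner_sub_left, inner_sub_right, real_inner_smul_left, real_inner_smul_right,
    real_inner_self_eq_norm_sq, real_inner_comm x, RCLike.ofReal_real_eq_id, id]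
  field_simp
  ring

theorem inner_starProjection_orthogonal_span_singleton_nonpos {x y z : E} (hyz : ⟪y, z⟫ ≤ 0)
    (hxy : ⟪x, y⟫ ≤ 0) (hxz : ⟪x, z⟫ ≤ 0) :
    ⟪(ℝ ∙ x)ᗮ.starProjection y, (ℝ ∙ x)ᗮ.starProjection z⟫ ≤ 0 := by
  rw [inner_starProjection_orthogonal_span_singleton]
  have : 0 ≤ ⟪x, y⟫ * ⟪x, z⟫ / ‖x‖ ^ 2 :=
    div_nonneg (mul_nonneg_of_nonpos_of_nonpos hxy hxz) (sq_nonneg _)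
  linarith

theorem inner_ne_zero_of_starProjection_orthogonal_span_singleton_eq_zero {x y : E} (hy : y ≠ 0)
    (h : (ℝ ∙ x)ᗮ.starProjection y = 0) : ⟪x, y⟫ ≠ 0 := by
  intro hxy
  have := inner_starProjection_orthogonal_span_singleton x y y
  rw [h, hxy, inner_zero_left, zero_mul, zero_div, sub_zero] at this
  exact hy (real_inner_self_nonpos.mp this.symm.le)

/-- A common image would have to be `0`, making `y` and `z` negative multiples of `x`, whose inner
product is positive. -/
theorem starProjection_orthogonal_span_singleton_ne {x y z : E} (hy : y ≠ 0) (hz : z ≠ 0)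
    (hyz : ⟪y, z⟫ ≤ 0) (hxy : ⟪x, y⟫ ≤ 0) (hxz : ⟪x, z⟫ ≤ 0) :
    (ℝ ∙ x)ᗮ.starProjection y ≠ (ℝ ∙ x)ᗮ.starProjection z := by
  intro h
  have hPyz := inner_starProjection_orthogonal_span_singleton_nonpos hyz hxy hxz
  have hPz : (ℝ ∙ x)ᗮ.starProjection z = 0 := by
    rw [h] at hPyz
    exact real_inner_self_nonpos.mp hPyz
  have hPy : (ℝ ∙ x)ᗮ.starProjection y = 0 := h.trans hPz
  have hxy' : ⟪x, y⟫ < 0 :=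
    hxy.lt_of_ne (inner_ne_zero_of_starProjection_orthogonal_span_singleton_eq_zero hy hPy)
  have hxz' : ⟪x, z⟫ < 0 :=
    hxz.lt_of_ne (inner_ne_zero_of_starProjection_orthogonal_span_singleton_eq_zero hz hPz)
  have hx : x ≠ 0 := by rintro rfl; simp at hxy'
  have hidentity := inner_starProjection_orthogonal_span_singleton x y z
  rw [hPy, hPz, inner_zero_left] at hidentity
  have : 0 < ⟪x, y⟫ * ⟪x, z⟫ / ‖x‖ ^ 2 := by
    have := norm_pos_iff.mpr hx
    have := mul_pos_of_neg_of_neg hxy' hxz'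
    positivity
  linarith

end ObtuseProjection

theorem Finset.card_le_two_mul_finrank_of_pairwise_inner_nonpos {E : Type*}
    [NormedAddCommGroup E] [InnerProductSpace ℝ E] [FiniteDimensional ℝ E] (S : Finset E)
    (hS0 : 0 ∉ S) (hS : (S : Set E).Pairwise fun x y ↦ ⟪x, y⟫ ≤ 0) :
    S.card ≤ 2 * finrank ℝ E := by
  classical
  induction hd : finrank ℝ E generalizing E with
  | zero =>
    have : Subsingleton E := finrank_zero_iff.mp hd
    rw [mul_zero, Nat.le_zero, card_eq_zero, eq_empty_iff_forall_notMem]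
    intro y hy
    exact hS0 (Subsingleton.elim y 0 ▸ hy)
  | succ d ih =>
    obtain rfl | ⟨x, hx⟩ := S.eq_empty_or_nonempty
    · simp
    have hx0 : x ≠ 0 := ne_of_mem_of_not_mem hx hS0
    have : Fact (finrank ℝ E = d + 1) := ⟨hd⟩
    set K := (ℝ ∙ x)ᗮ
    set P := K.orthogonalProjectionOnto
    have hobtuse : ∀ y ∈ S.erase x, ∀ z ∈ S.erase x, y ≠ z →
        ⟪y, z⟫ ≤ 0 ∧ ⟪x, y⟫ ≤ 0 ∧ ⟪x, z⟫ ≤ 0 := fun y hy z hz hyz ↦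
      ⟨hS (mem_of_mem_erase hy) (mem_of_mem_erase hz) hyz,
        hS hx (mem_of_mem_erase hy) (ne_of_mem_erase hy).symm,
        hS hx (mem_of_mem_erase hz) (ne_of_mem_erase hz).symm⟩
    have hinj : Set.InjOn P (S.erase x) := by
      intro y hy z hz hPyz
      by_contra hyz
      obtain ⟨hyz', hxy, hxz⟩ := hobtuse y hy z hz hyz
      refine starProjection_orthogonal_span_singleton_ne ?_ ?_ hyz' hxy hxz ?_
      · exact ne_of_mem_of_not_mem (mem_of_mem_erase hy) hS0
      · exact ne_of_mem_of_not_mem (mem_of_mem_erase hz) hS0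
      · simp only [Submodule.starProjection_apply, P] at hPyz ⊢
        rw [hPyz]
    set T := ((S.erase x).image P).erase 0
    have hT : (T : Set K).Pairwise fun u v ↦ ⟪u, v⟫ ≤ 0 := by
      refine Set.Pairwise.mono (coe_subset.mpr (erase_subset _ _)) ?_
      rw [coe_image, hinj.pairwise_image]
      intro y hy z hz hyz
      obtain ⟨hyz', hxy, hxz⟩ := hobtuse y hy z hz hyz
      simpa only [Function.onFun, Submodule.coe_inner, Submodule.starProjection_apply] using
        inner_starProjection_orthogonal_span_singleton_nonpos hyz' hxy hxz
    have hTcard := ih T (notMem_erase 0 _) hT (Submodule.finrank_orthogonal_span_singleton hx0)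
    have hTS : (S.erase x).card - 1 ≤ T.card := card_image_of_injOn hinj ▸ pred_card_le_card_erase
    have hSx : (S.erase x).card = S.card - 1 := card_erase_of_mem hx
    have := card_pos.mpr ⟨x, hx⟩
    omega

/-- Rankin's bound: unit vectors with pairwise nonpositive inner products. -/
theorem stmt10 (n : ℕ) (C : Finset (EuclideanSpace ℝ (Fin n)))
    (hC : ∀ x ∈ C, ‖x‖ = 1)
    (hnp : ∀ x ∈ C, ∀ y ∈ C, x ≠ y → ⟪x, y⟫ ≤ 0) :
    C.card ≤ 2 * n := by
  have hC0 : (0 : EuclideanSpace ℝ (Fin n)) ∉ C := fun h0 ↦ by simpa using hC 0 h0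
  simpa using C.card_le_two_mul_finrank_of_pairwise_inner_nonpos hC0 hnp
end

section
/- The maximum number of equiangular lines in ℝ^n is at most n(n+1)/2 (Gerzon's bound): if v_1,...,v_m are unit vectors in ℝ^n with |⟨v_i,v_j⟩| = α for all i ≠ j, where 0 < α < 1, then m ≤ n(n+1)/2. -/
/-!
The rank-one matrices `v i ⊗ v i` have Frobenius Gram matrix `(⟪v i, v j⟫ ^ 2)`, which for an
equiangular family of unit vectors is `(1 - α ^ 2) • 1 + α ^ 2 • J` and hence positive definite.
So they are linearly independent, and being symmetric they live in a space of dimension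
`n (n + 1) / 2`: that of functions on `Sym2 (Fin n)`.
-/

open RealInnerProductSpace

open Matrix

variable {ι m : Type*}

noncomputable def EuclideanSpace.selfTensor (v : EuclideanSpace ℝ ι) :
    EuclideanSpace ℝ (ι × ι) :=
  WithLp.toLp 2 fun p => v p.1 * v p.2

noncomputable def EuclideanSpace.symSquare (v : EuclideanSpace ℝ ι) : Sym2 ι → ℝ :=
  Sym2.lift ⟨fun j k => v j * v k, fun _ _ => mul_comm _ _⟩

noncomputable def Sym2.funLeftMk : (Sym2 ι → ℝ) →ₗ[ℝ] EuclideanSpace ℝ (ι × ι) :=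
  (WithLp.linearEquiv 2 ℝ (ι × ι → ℝ)).symm.toLinearMap ∘ₗ
    LinearMap.funLeft ℝ ℝ fun p : ι × ι => s(p.1, p.2)

theorem EuclideanSpace.inner_selfTensor [Fintype ι] (v w : EuclideanSpace ℝ ι) :
    ⟪v.selfTensor, w.selfTensor⟫ = ⟪v, w⟫ ^ 2 := by
  simp only [selfTensor, PiLp.inner_apply, RCLike.inner_apply, conj_trivial,
    Fintype.sum_prod_type, sq, Finset.sum_mul_sum]
  exact Finset.sum_congr rfl fun _ _ => Finset.sum_congr rfl fun _ _ => by ring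

theorem Matrix.posDef_smul_one_add_smul_vecMulVec_one [Fintype m] [DecidableEq m] {a b : ℝ}
    (ha : 0 < a) (hb : 0 ≤ b) :
    (a • (1 : Matrix m m ℝ) + b • vecMulVec 1 1).PosDef :=
  (PosDef.one.smul ha).add_posSemidef ((posSemidef_vecMulVec_self_star 1).smul hb)

theorem gram_selfTensor_of_equiangular [Fintype ι] [DecidableEq m]
    {v : m → EuclideanSpace ℝ ι} {α : ℝ} (hv : ∀ i, ‖v i‖ = 1)
    (heq : ∀ i j, i ≠ j → |⟪v i, v j⟫| = α) :
    gram ℝ (fun i => (v i).selfTensor) = (1 - α ^ 2) • 1 + α ^ 2 • vecMulVec 1 1 := by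
  ext i j
  rw [gram_apply, EuclideanSpace.inner_selfTensor]
  rcases eq_or_ne i j with rfl | hij
  · simp [hv]
  · simp [hij, ← sq_abs, heq i j hij]

theorem linearIndependent_selfTensor_of_equiangular [Fintype ι] [Fintype m]
    {v : m → EuclideanSpace ℝ ι} {α : ℝ} (hα : 0 ≤ α) (hα1 : α < 1) (hv : ∀ i, ‖v i‖ = 1)
    (heq : ∀ i j, i ≠ j → |⟪v i, v j⟫| = α) :
    LinearIndependent ℝ fun i => (v i).selfTensor := by
  classical
  apply linearIndependent_of_posDef_gram
  rw [gram_selfTensor_of_equiangular hv heq]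
  exact posDef_smul_one_add_smul_vecMulVec_one (by nlinarith) (sq_nonneg α)

theorem card_le_choose_of_equiangular [Fintype ι] [Fintype m]
    {v : m → EuclideanSpace ℝ ι} {α : ℝ} (hα : 0 ≤ α) (hα1 : α < 1) (hv : ∀ i, ‖v i‖ = 1)
    (heq : ∀ i j, i ≠ j → |⟪v i, v j⟫| = α) :
    Fintype.card m ≤ (Fintype.card ι + 1).choose 2 := by
  have hind : LinearIndependent ℝ fun i => (v i).symSquare :=
    .of_comp Sym2.funLeftMk (linearIndependent_selfTensor_of_equiangular hα hα1 hv heq)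
  simpa [Module.finrank_fintype_fun_eq_card, Sym2.card] using hind.fintype_card_le_finrank

/-- Gerzon's bound on equiangular lines. -/
theorem stmt12 (n m : ℕ) (α : ℝ) (hα : 0 < α) (hα1 : α < 1)
    (v : Fin m → EuclideanSpace ℝ (Fin n)) (hv : ∀ i, ‖v i‖ = 1)
    (heq : ∀ i j, i ≠ j → |⟪v i, v j⟫| = α) :
    m ≤ n * (n + 1) / 2 := by
  have hcard := card_le_choose_of_equiangular hα.le hα1 hv heq
  rwa [Fintype.card_fin, Fintype.card_fin, Nat.choose_two_right, mul_comm] at hcard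
end

section
/- If v_1,...,v_m are unit vectors in ℝ^n with |⟨v_i,v_j⟩| = α for all i ≠ j, 0 < α < 1, then the symmetric matrices v_i v_i^T (outer products) are linearly independent in the space of symmetric n×n matrices. -/
/-!
Pair a relation `∑ i, g i • vᵢ vᵢᵀ = 0` with each `vⱼ` (i.e. apply `A ↦ vⱼᵀ A vⱼ`): this gives
`∑ i, g i * ⟪vᵢ, vⱼ⟫² = 0` for all `j`. For equiangular unit vectors the matrix `(⟪vᵢ, vⱼ⟫²)` is
`(1 - α²) I + α² J` with `J` the all-ones matrix, which is positive definite as `α² < 1`; hence its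
rows are linearly independent and `g = 0`.
-/

open RealInnerProductSpace Matrix

section
variable {ι n R : Type*} [Fintype n] [CommRing R]

theorem dotProduct_vecMulVec_self_mulVec (u w : n → R) :
    w ⬝ᵥ (vecMulVec u u *ᵥ w) = (u ⬝ᵥ w) ^ 2 := by
  rw [vecMulVec_mulVec, op_smul_eq_smul, dotProduct_smul, dotProduct_comm w u, smul_eq_mul, sq]

theorem LinearIndependent.vecMulVec_self_of_sq_dotProduct {v : ι → n → R}
    (h : LinearIndependent R fun i j => (v i ⬝ᵥ v j) ^ 2) :
    LinearIndependent R fun i => vecMulVec (v i) (v i) := by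
  let testAgainst : Matrix n n R →ₗ[R] ι → R :=
    { toFun := fun A j => v j ⬝ᵥ (A *ᵥ v j)
      map_add' := fun A B => by ext j; simp [add_mulVec, dotProduct_add]
      map_smul' := fun c A => by ext j; simp [smul_mulVec, dotProduct_smul] }
  apply LinearIndependent.of_comp testAgainst
  convert h using 1
  funext i j
  exact dotProduct_vecMulVec_self_mulVec (v i) (v j)

end

theorem posDef_smul_one_add_smul_const {m : Type*} [Fintype m] [DecidableEq m] {a b : ℝ}
    (ha : 0 < a) (hb : 0 ≤ b) : (a • (1 : Matrix m m ℝ) + b • of fun _ _ => 1).PosDef := by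
  have hJ : (of fun _ _ => 1 : Matrix m m ℝ).PosSemidef := by
    convert posSemidef_vecMulVec_self_star (1 : m → ℝ) using 1
    ext; simp
  exact (PosDef.one.smul ha).add_posSemidef (hJ.smul hb)

theorem EuclideanSpace.ofLp_dotProduct_ofLp {n : Type*} [Fintype n] (x y : EuclideanSpace ℝ n) :
    ⇑x ⬝ᵥ ⇑y = ⟪x, y⟫ := by
  rw [EuclideanSpace.inner_eq_star_dotProduct, dotProduct_comm]
  rfl

/-- The outer products `vᵢ vᵢᵀ` of equiangular unit vectors are linearly independent
(as symmetric `n × n` matrices). -/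
theorem stmt13 (n m : ℕ) (α : ℝ) (hα : 0 < α) (hα1 : α < 1)
    (v : Fin m → EuclideanSpace ℝ (Fin n)) (hv : ∀ i, ‖v i‖ = 1)
    (heq : ∀ i j, i ≠ j → |⟪v i, v j⟫| = α) :
    LinearIndependent ℝ
      (fun i : Fin m => Matrix.of (fun k l : Fin n => v i k * v i l)) := by
  have hgram : ∀ i j, (⇑(v i) ⬝ᵥ ⇑(v j)) ^ 2 =
      ((1 - α ^ 2) • 1 + α ^ 2 • of fun _ _ => 1 : Matrix (Fin m) (Fin m) ℝ) i j := by
    intro i j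
    rw [EuclideanSpace.ofLp_dotProduct_ofLp]
    rcases eq_or_ne i j with rfl | hij
    · simp [hv]
    · simp [← sq_abs, heq i j hij, one_apply_ne hij]
  have hrows : LinearIndependent ℝ fun i j => (⇑(v i) ⬝ᵥ ⇑(v j)) ^ 2 := by
    rw [show (fun i j => (⇑(v i) ⬝ᵥ ⇑(v j)) ^ 2) = _ from funext₂ hgram]
    exact linearIndependent_rows_iff_isUnit.mpr
      (posDef_smul_one_add_smul_const (by nlinarith) (sq_nonneg α)).isUnit
  exact hrows.vecMulVec_self_of_sq_dotProduct
end

section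
/- Let C be a finite set of unit vectors in ℝ^n with ⟨x,y⟩ ∈ {a,b} for distinct x,y ∈ C, and a+b ≥ 0 with b < a < 1. Then the functions f_x(z) = (⟨x,z⟩ − a)(⟨x,z⟩ − b), for x ∈ C, restricted to the sphere, are linearly independent elements of the space of polynomials of degree ≤ 2 on S^{n-1}, and hence |C| is at most the dimension of the space spanned by such quadratic polynomials. -/
open RealInnerProductSpace

/-!
Each `f_x` vanishes at every other point of `C`, since `⟪x, y⟫ ∈ {a, b}` there, but not at `x`
itself, where it equals `(1 - a)(1 - b) > 0`. Evaluating a vanishing linear combination at the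
points of `C` therefore kills each coefficient in turn.
-/

theorem linearIndependent_of_apply_eq_zero_of_ne {ι X R : Type*} [Ring R] [NoZeroDivisors R]
    {g : ι → X → R} (p : ι → X) (hdiag : ∀ i, g i (p i) ≠ 0)
    (hoff : ∀ i j, i ≠ j → g j (p i) = 0) : LinearIndependent R g := by
  rw [linearIndependent_iff']
  intro s c hsum i hi
  have hzero : ∑ j ∈ s, c j * g j (p i) = 0 := by
    simpa only [Finset.sum_apply, Pi.smul_apply, smul_eq_mul,
      Pi.zero_apply] using congrFun hsum (p i)
  rw [Finset.sum_eq_single_of_mem i hi fun j _ hji => by rw [hoff i j hji.symm, mul_zero]]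
    at hzero
  exact (mul_eq_zero.mp hzero).resolve_right (hdiag i)

theorem stmt15_general (n : ℕ) (C : Finset (EuclideanSpace ℝ (Fin n)))
    (hC : ∀ x ∈ C, ‖x‖ = 1) (a b : ℝ) (hba : b < a) (ha1 : a < 1)
    (h2 : ∀ x ∈ C, ∀ y ∈ C, x ≠ y → ⟪x, y⟫ = a ∨ ⟪x, y⟫ = b)
    (f : EuclideanSpace ℝ (Fin n) →
      (Metric.sphere (0 : EuclideanSpace ℝ (Fin n)) 1 → ℝ))
    (hf : ∀ x, ∀ z : Metric.sphere (0 : EuclideanSpace ℝ (Fin n)) 1,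
      f x z = (⟪x, (z : EuclideanSpace ℝ (Fin n))⟫ - a) *
              (⟪x, (z : EuclideanSpace ℝ (Fin n))⟫ - b)) :
    LinearIndependent ℝ (fun x : {x // x ∈ C} => f x.1) ∧
    C.card ≤ Module.finrank ℝ
      (Submodule.span ℝ (Set.range (fun x : {x // x ∈ C} => f x.1))) := by
  have hsphere : ∀ x ∈ C, x ∈ Metric.sphere (0 : EuclideanSpace ℝ (Fin n)) 1 := fun x hx =>
    mem_sphere_zero_iff_norm.mpr (hC x hx)
  have hind : LinearIndependent ℝ (fun x : {x // x ∈ C} => f x.1) := by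
    refine linearIndependent_of_apply_eq_zero_of_ne (fun x => ⟨x.1, hsphere x.1 x.2⟩) ?_ ?_
    · intro x
      have hself : ⟪x.1, x.1⟫ = 1 := by rw [real_inner_self_eq_norm_sq, hC x.1 x.2, one_pow]
      rw [hf, hself]
      exact mul_ne_zero (by linarith) (by linarith)
    · intro x y hxy
      rw [hf]
      rcases h2 y.1 y.2 x.1 x.2 (fun h => hxy (Subtype.ext h).symm) with h | h <;>
        simp only [h, sub_self, mul_zero, zero_mul]
  exact ⟨hind, by rw [finrank_span_eq_card hind, Fintype.card_coe]⟩

/-- The functions `f_x(z) = (⟪x,z⟫ - a)(⟪x,z⟫ - b)` on the sphere, for `x ∈ C`, are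
linearly independent, and hence `|C|` is bounded by the dimension of their span. -/
theorem stmt15 (n : ℕ) (C : Finset (EuclideanSpace ℝ (Fin n)))
    (hC : ∀ x ∈ C, ‖x‖ = 1) (a b : ℝ) (hba : b < a) (ha1 : a < 1) (hab : 0 ≤ a + b)
    (h2 : ∀ x ∈ C, ∀ y ∈ C, x ≠ y → ⟪x, y⟫ = a ∨ ⟪x, y⟫ = b)
    (f : EuclideanSpace ℝ (Fin n) →
      (Metric.sphere (0 : EuclideanSpace ℝ (Fin n)) 1 → ℝ))
    (hf : ∀ x, ∀ z : Metric.sphere (0 : EuclideanSpace ℝ (Fin n)) 1,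
      f x z = (⟪x, (z : EuclideanSpace ℝ (Fin n))⟫ - a) *
              (⟪x, (z : EuclideanSpace ℝ (Fin n))⟫ - b)) :
    LinearIndependent ℝ (fun x : {x // x ∈ C} => f x.1) ∧
    C.card ≤ Module.finrank ℝ
      (Submodule.span ℝ (Set.range (fun x : {x // x ∈ C} => f x.1))) :=
  stmt15_general n C hC a b hba ha1 h2 f hf
end

section
/- Any spherical two-distance set in ℝ^n has cardinality at most n(n+3)/2. (Delsarte–Goethals–Seidel harmonic bound.) -/
open RealInnerProductSpace

/-!
For `x ∈ C` the quadratic `y ↦ (⟪x, y⟫ - a) (⟪x, y⟫ - b)` vanishes on `C \ {x}` and equals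
`(1 - a) (1 - b) ≠ 0` at `x`, so their restrictions to `C` span all functions on `C`.
On the unit sphere each of them is a polynomial of degree at most two without constant term
(write the constant `a b` as `a b ‖y‖²`), and such polynomials are spanned by
`n (n + 1) / 2 + n = n (n + 3) / 2` monomials.
-/

theorem Nat.succ_choose_two_add_self (n : ℕ) : (n + 1).choose 2 + n = n * (n + 3) / 2 := by
  rw [Nat.choose_two_right, Nat.add_one_sub_one, ← Nat.add_mul_div_left _ _ two_pos]
  congr 1
  ring

theorem Submodule.eq_top_of_forall_single_mem {ι K : Type*} [Finite ι] [DecidableEq ι] [Field K]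
    {V : Submodule K (ι → K)} {c : ι → K} (hc : ∀ i, c i ≠ 0) (h : ∀ i, Pi.single i (c i) ∈ V) :
    V = ⊤ := by
  refine eq_top_iff.2 <| (Pi.basisFun K ι).span_eq.ge.trans <| Submodule.span_le.2 ?_
  rintro _ ⟨i, rfl⟩
  have hsingle : Pi.single i (1 : K) = (c i)⁻¹ • Pi.single i (c i) := by
    rw [← Pi.single_smul, smul_eq_mul, inv_mul_cancel₀ (hc i)]
  rw [SetLike.mem_coe, Pi.basisFun_apply, hsingle]
  exact V.smul_mem _ (h i)

section AnnihilatingQuadratic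

variable {E : Type*} [NormedAddCommGroup E] [InnerProductSpace ℝ E]

def annihilatingQuadratic (x : E) (a b : ℝ) (y : E) : ℝ :=
  ⟪x, y⟫ ^ 2 - (a + b) * ⟪x, y⟫ + a * b * ‖y‖ ^ 2

theorem annihilatingQuadratic_of_norm_eq_one (x : E) (a b : ℝ) {y : E} (hy : ‖y‖ = 1) :
    annihilatingQuadratic x a b y = (⟪x, y⟫ - a) * (⟪x, y⟫ - b) := by
  rw [annihilatingQuadratic, hy]
  ring

theorem funLeft_annihilatingQuadratic_eq_single (C : Finset E) [DecidableEq C]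
    (hC : ∀ x ∈ C, ‖x‖ = 1) {a b : ℝ}
    (hinner : ∀ x ∈ C, ∀ y ∈ C, x ≠ y → ⟪x, y⟫ ∈ ({a, b} : Set ℝ)) (x : C) :
    LinearMap.funLeft ℝ ℝ ((↑) : C → E) (annihilatingQuadratic x a b) =
      Pi.single x ((1 - a) * (1 - b)) := by
  funext y
  rw [LinearMap.funLeft_apply, annihilatingQuadratic_of_norm_eq_one _ _ _ (hC y y.2)]
  obtain rfl | hyx := eq_or_ne y x
  · rw [real_inner_self_eq_norm_sq, hC y y.2, Pi.single_eq_same]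
    ring
  · rw [Pi.single_eq_of_ne hyx]
    rcases hinner x x.2 y y.2 fun h ↦ hyx (Subtype.ext h.symm) with h | h <;>
      simp [Set.mem_singleton_iff.1 h]

end AnnihilatingQuadratic

section QuadraticLinearSpan

variable {n : ℕ}

theorem EuclideanSpace.real_inner_eq_sum (x y : EuclideanSpace ℝ (Fin n)) :
    ⟪x, y⟫ = ∑ i, x i * y i := by
  simp [PiLp.inner_apply, mul_comm]

def quadraticLinearMonomial (n : ℕ) : Sym2 (Fin n) ⊕ Fin n → EuclideanSpace ℝ (Fin n) → ℝ :=
  Sum.elim (Sym2.lift ⟨fun i j y ↦ y i * y j, fun _ _ ↦ funext fun _ ↦ mul_comm _ _⟩)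
    fun i y ↦ y i

def quadraticLinearSpan (n : ℕ) : Submodule ℝ (EuclideanSpace ℝ (Fin n) → ℝ) :=
  Submodule.span ℝ (Set.range (quadraticLinearMonomial n))

instance : FiniteDimensional ℝ (quadraticLinearSpan n) :=
  FiniteDimensional.span_of_finite ℝ (Set.finite_range _)

theorem finrank_quadraticLinearSpan_le :
    Module.finrank ℝ (quadraticLinearSpan n) ≤ n * (n + 3) / 2 :=
  (finrank_range_le_card _).trans_eq <| by
    rw [Fintype.card_sum, Sym2.card, Fintype.card_fin, Nat.succ_choose_two_add_self]

theorem coord_mul_coord_mem_quadraticLinearSpan (i j : Fin n) :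
    (fun y : EuclideanSpace ℝ (Fin n) ↦ y i * y j) ∈ quadraticLinearSpan n :=
  Submodule.subset_span ⟨Sum.inl s(i, j), rfl⟩

theorem coord_mem_quadraticLinearSpan (i : Fin n) :
    (fun y : EuclideanSpace ℝ (Fin n) ↦ y i) ∈ quadraticLinearSpan n :=
  Submodule.subset_span ⟨Sum.inr i, rfl⟩

theorem inner_mem_quadraticLinearSpan (x : EuclideanSpace ℝ (Fin n)) :
    (fun y ↦ ⟪x, y⟫) ∈ quadraticLinearSpan n := by
  have hsum : (fun y ↦ ⟪x, y⟫) = ∑ i, x i • fun y : EuclideanSpace ℝ (Fin n) ↦ y i := by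
    funext y
    simp [EuclideanSpace.real_inner_eq_sum]
  rw [hsum]
  exact Submodule.sum_mem _ fun i _ ↦ Submodule.smul_mem _ _ (coord_mem_quadraticLinearSpan i)

theorem inner_sq_mem_quadraticLinearSpan (x : EuclideanSpace ℝ (Fin n)) :
    (fun y ↦ ⟪x, y⟫ ^ 2) ∈ quadraticLinearSpan n := by
  have hsum : (fun y ↦ ⟪x, y⟫ ^ 2) =
      ∑ i, ∑ j, (x i * x j) • fun y : EuclideanSpace ℝ (Fin n) ↦ y i * y j := by
    funext y
    simp only [EuclideanSpace.real_inner_eq_sum, sq, Finset.sum_mul_sum, Finset.sum_apply,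
      Pi.smul_apply, smul_eq_mul]
    exact Finset.sum_congr rfl fun _ _ ↦ Finset.sum_congr rfl fun _ _ ↦ by ring
  rw [hsum]
  exact Submodule.sum_mem _ fun i _ ↦ Submodule.sum_mem _ fun j _ ↦
    Submodule.smul_mem _ _ (coord_mul_coord_mem_quadraticLinearSpan i j)

theorem norm_sq_mem_quadraticLinearSpan :
    (fun y : EuclideanSpace ℝ (Fin n) ↦ ‖y‖ ^ 2) ∈ quadraticLinearSpan n := by
  have hsum : (fun y : EuclideanSpace ℝ (Fin n) ↦ ‖y‖ ^ 2) = ∑ i, fun y ↦ y i * y i := by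
    funext y
    rw [← real_inner_self_eq_norm_sq, EuclideanSpace.real_inner_eq_sum, Finset.sum_apply]
  rw [hsum]
  exact Submodule.sum_mem _ fun i _ ↦ coord_mul_coord_mem_quadraticLinearSpan i i

theorem annihilatingQuadratic_mem_quadraticLinearSpan (x : EuclideanSpace ℝ (Fin n)) (a b : ℝ) :
    annihilatingQuadratic x a b ∈ quadraticLinearSpan n := by
  have hsum : annihilatingQuadratic x a b =
      (fun y ↦ ⟪x, y⟫ ^ 2) - (a + b) • (fun y ↦ ⟪x, y⟫) + (a * b) • fun y ↦ ‖y‖ ^ 2 := by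
    funext y
    simp [annihilatingQuadratic]
  rw [hsum]
  exact Submodule.add_mem _
    (Submodule.sub_mem _ (inner_sq_mem_quadraticLinearSpan x)
      (Submodule.smul_mem _ _ (inner_mem_quadraticLinearSpan x)))
    (Submodule.smul_mem _ _ norm_sq_mem_quadraticLinearSpan)

end QuadraticLinearSpan

theorem card_le_of_inner_mem_pair {n : ℕ} (C : Finset (EuclideanSpace ℝ (Fin n)))
    (hC : ∀ x ∈ C, ‖x‖ = 1) {a b : ℝ} (ha : a ≠ 1) (hb : b ≠ 1)
    (hinner : ∀ x ∈ C, ∀ y ∈ C, x ≠ y → ⟪x, y⟫ ∈ ({a, b} : Set ℝ)) :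
    C.card ≤ n * (n + 3) / 2 := by
  classical
  let restrict := LinearMap.funLeft ℝ ℝ ((↑) : C → EuclideanSpace ℝ (Fin n))
  have hc : (1 - a) * (1 - b) ≠ 0 := mul_ne_zero (sub_ne_zero.2 ha.symm) (sub_ne_zero.2 hb.symm)
  have htop : (quadraticLinearSpan n).map restrict = ⊤ := by
    refine Submodule.eq_top_of_forall_single_mem (fun _ ↦ hc) fun x ↦ ?_
    rw [← funLeft_annihilatingQuadratic_eq_single C hC hinner x]
    exact Submodule.mem_map_of_mem (f := restrict)
      (annihilatingQuadratic_mem_quadraticLinearSpan (x : EuclideanSpace ℝ (Fin n)) a b)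
  calc C.card = Module.finrank ℝ (C → ℝ) := by
        rw [Module.finrank_fintype_fun_eq_card, Fintype.card_coe]
    _ = Module.finrank ℝ ((quadraticLinearSpan n).map restrict) := by rw [htop, finrank_top]
    _ ≤ Module.finrank ℝ (quadraticLinearSpan n) := Submodule.finrank_map_le _ _
    _ ≤ n * (n + 3) / 2 := finrank_quadraticLinearSpan_le

/-- Delsarte–Goethals–Seidel harmonic bound: a spherical two-distance set in `ℝⁿ`
has at most `n(n+3)/2` points. -/
theorem stmt16 (n : ℕ) (C : Finset (EuclideanSpace ℝ (Fin n)))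
    (hC : ∀ x ∈ C, ‖x‖ = 1)
    (h2 : ∃ a b : ℝ, a ≠ b ∧
      {t : ℝ | ∃ x ∈ C, ∃ y ∈ C, x ≠ y ∧ ⟪x, y⟫ = t} = {a, b}) :
    C.card ≤ n * (n + 3) / 2 := by
  obtain ⟨a, b, -, hset⟩ := h2
  have hinner : ∀ x ∈ C, ∀ y ∈ C, x ≠ y → ⟪x, y⟫ ∈ ({a, b} : Set ℝ) :=
    fun x hx y hy hxy ↦ hset ▸ ⟨x, hx, y, hy, hxy, rfl⟩
  have hne_one : ∀ t ∈ ({a, b} : Set ℝ), t ≠ 1 := by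
    rw [← hset]
    rintro t ⟨x, hx, y, hy, hxy, rfl⟩ h1
    exact hxy ((inner_eq_one_iff_of_norm_eq_one (hC x hx) (hC y hy)).1 h1)
  exact card_le_of_inner_mem_pair C hC (hne_one a (by simp)) (hne_one b (by simp)) hinner
end

section
/- A univariate real polynomial f of degree at most m satisfies f(a) ≥ 0 for all a in the closed interval [a₁,a₂] (with a₁ < a₂) if and only if the polynomial f⁺(a) = (1+a²)^m · f((a₁ + a₂·a²)/(1+a²)) is nonnegative for all real a. -/
/-!
The map `t ↦ (a₁ + a₂ t²)/(1 + t²)` sends `ℝ` onto `[a₁, a₂)`, and the factor `(1 + t²)^m` is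
positive, so `f⁺ ≥ 0` on `ℝ` says exactly that `f ≥ 0` on `[a₁, a₂)`. By continuity of `f` this
extends to the closure `[a₁, a₂]`.
-/

open Set

theorem range_div_one_add_sq {a₁ a₂ : ℝ} (h : a₁ < a₂) :
    range (fun t : ℝ ↦ (a₁ + a₂ * t ^ 2) / (1 + t ^ 2)) = Ico a₁ a₂ := by
  ext x
  constructor
  · rintro ⟨t, rfl⟩
    have hpos : (0 : ℝ) < 1 + t ^ 2 := by positivity
    constructor
    · rw [le_div_iff₀ hpos]; nlinarith [sq_nonneg t]
    · rw [div_lt_iff₀ hpos]; linarith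
  · rintro ⟨hx₁, hx₂⟩
    have hratio : 0 ≤ (x - a₁) / (a₂ - x) := div_nonneg (by linarith) (by linarith)
    -- invert `x = (a₁ + a₂ s)/(1 + s)` for `s = t²`
    refine ⟨√((x - a₁) / (a₂ - x)), ?_⟩
    have hden : a₂ - x ≠ 0 := by linarith
    simp only [Real.sq_sqrt hratio]
    field_simp
    ring

theorem forall_mem_Icc_of_forall_mem_Ico {p : ℝ → Prop} (hp : IsClosed {x | p x}) {a b : ℝ}
    (hab : a ≠ b) (hIco : ∀ x ∈ Ico a b, p x) : ∀ x ∈ Icc a b, p x := by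
  rw [← closure_Ico hab]
  exact hp.closure_subset_iff.mpr hIco

theorem stmt18_general (m : ℕ) (f : Polynomial ℝ)
    (a₁ a₂ : ℝ) (h : a₁ < a₂) :
    (∀ a ∈ Set.Icc a₁ a₂, 0 ≤ f.eval a) ↔
    (∀ a : ℝ, 0 ≤ (1 + a ^ 2) ^ m * f.eval ((a₁ + a₂ * a ^ 2) / (1 + a ^ 2))) := by
  have hscale (a : ℝ) (y : ℝ) : 0 ≤ (1 + a ^ 2) ^ m * y ↔ 0 ≤ y :=
    mul_nonneg_iff_of_pos_left (by positivity)
  simp only [hscale]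
  rw [← forall_mem_range (f := fun t : ℝ ↦ (a₁ + a₂ * t ^ 2) / (1 + t ^ 2))
    (p := fun x ↦ 0 ≤ f.eval x), range_div_one_add_sq h]
  exact ⟨fun hIcc x hx ↦ hIcc x (Ico_subset_Icc_self hx),
    forall_mem_Icc_of_forall_mem_Ico (isClosed_le continuous_const f.continuous) h.ne⟩

/-- A polynomial `f` of degree at most `m` is nonnegative on `[a₁, a₂]` if and only if
the polynomial `f⁺(a) = (1+a²)^m f((a₁ + a₂ a²)/(1+a²))` is nonnegative on all of `ℝ`. -/
theorem stmt18 (m : ℕ) (f : Polynomial ℝ) (hdeg : f.natDegree ≤ m)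
    (a₁ a₂ : ℝ) (h : a₁ < a₂) :
    (∀ a ∈ Set.Icc a₁ a₂, 0 ≤ f.eval a) ↔
    (∀ a : ℝ, 0 ≤ (1 + a ^ 2) ^ m * f.eval ((a₁ + a₂ * a ^ 2) / (1 + a ^ 2))) :=
  stmt18_general m f a₁ a₂ h
end
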